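/- arXiv:2304.00298 — 5 statements merged into one kernel-verified Lean document; each statement's English description precedes it below -/
import Mathlib

section
/- For any odd prime p and positive integer r, the sum over k from 0 to p^r - 1 of (1/2^k) * binomial(2k, k) is congruent to (-1)^((p^r - 1)/2) modulo p (as a congruence of p-adic integers). -/
/-!
Modulo `p`, `N = (p^r - 1)/2` is `-1/2`, and `k! C(2k, k) = (-4)^k (-1/2)(-1/2 - 1)⋯(-1/2 - k + 1)`;
so `C(2k, k) ≡ (-4)^k C(N, k)` whenever `k! ≢ 0`, i.e. for a single base-`p` digit `k`. Lucas's
theorem extends this to all `k < p^r`, since every base-`p` digit of `N` is `(p-1)/2` and a digit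
`d > (p-1)/2` of `k` makes both sides vanish. The sum thus becomes `∑ (-2)^k C(N, k) = (1 - 2)^N`.
-/

open Nat Finset

lemma factorial_mul_centralBinom_eq_neg_four_pow_mul_eval_descPochhammer {R : Type*} [CommRing R]
    {h : R} (hh : 2 * h + 1 = 0) (d : ℕ) :
    (d ! : R) * d.centralBinom = (-4) ^ d * (descPochhammer R d).eval h := by
  induction d with
  | zero => simp
  | succ d ih =>
    have step := congrArg (Nat.cast : ℕ → R) (succ_mul_centralBinom_succ d)
    push_cast at step
    rw [factorial_succ, descPochhammer_succ_eval, pow_succ]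
    push_cast
    linear_combination (d ! : R) * step + 2 * (2 * d + 1) * ih
      + 2 * (-4) ^ d * (descPochhammer R d).eval h * hh

section ZModPrime

variable {p : ℕ} [Fact p.Prime]

lemma choose_two_mul_eq_neg_four_pow_mul_choose_of_lt {N d : ℕ} (hN : (2 * N + 1 : ZMod p) = 0)
    (hd : d < p) : ((2 * d).choose d : ZMod p) = (-4) ^ d * N.choose d := by
  have key := factorial_mul_centralBinom_eq_neg_four_pow_mul_eval_descPochhammer hN d
  rw [descPochhammer_eval_eq_descFactorial, descFactorial_eq_factorial_mul_choose,
    centralBinom_eq_two_mul_choose] at key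
  have hfact : (d ! : ZMod p) ≠ 0 := by
    rw [Ne, ZMod.natCast_eq_zero_iff, (Fact.out : p.Prime).dvd_factorial]
    omega
  push_cast at key
  exact mul_left_cancel₀ hfact (by linear_combination key)

lemma choose_mul_add_mul_add {a b c d : ℕ} (hb : b < p) (hd : d < p) :
    ((p * a + b).choose (p * c + d) : ZMod p) = a.choose c * b.choose d := by
  have hp := (Fact.out : p.Prime).pos
  rw [(ZMod.natCast_eq_natCast_iff _ _ _).mpr Choose.choose_modEq_choose_mod_mul_choose_div_nat,
    Nat.mul_add_mod, Nat.mul_add_mod, Nat.mul_add_div hp, Nat.mul_add_div hp,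
    Nat.mod_eq_of_lt hb, Nat.mod_eq_of_lt hd, Nat.div_eq_of_lt hb, Nat.div_eq_of_lt hd,
    add_zero, add_zero, Nat.cast_mul, mul_comm]

end ZModPrime

lemma pow_succ_sub_one_div_two {p : ℕ} (hodd : Odd p) (r : ℕ) :
    (p ^ (r + 1) - 1) / 2 = p * ((p ^ r - 1) / 2) + (p - 1) / 2 := by
  obtain ⟨B, hB⟩ := hodd.pow (n := r)
  obtain ⟨m, rfl⟩ := hodd
  have : (2 * m + 1) ^ (r + 1) = 2 * ((2 * m + 1) * B + m) + 1 := by rw [pow_succ, hB]; ring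
  rw [this, hB]
  simp only [Nat.add_sub_cancel, Nat.mul_div_cancel_left _ two_pos]

lemma sum_range_pow_mul_choose_of_lt {R : Type*} [CommSemiring R] (x : R) {N M : ℕ} (h : N < M) :
    ∑ k ∈ range M, x ^ k * N.choose k = (x + 1) ^ N := by
  rw [add_pow]
  refine (sum_subset (range_subset_range.2 h) fun k _ hk => ?_).symm.trans ?_
  · rw [choose_eq_zero_of_lt (by simpa using hk), Nat.cast_zero, mul_zero]
  · simp

lemma choose_two_mul_eq_neg_four_pow_mul_choose {p : ℕ} [Fact p.Prime] (hodd : Odd p) (r : ℕ)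
    {k : ℕ} (hk : k < p ^ r) :
    ((2 * k).choose k : ZMod p) = (-4) ^ k * ((p ^ r - 1) / 2).choose k := by
  induction r generalizing k with
  | zero => simp_all
  | succ r ih =>
    have hp := (Fact.out : p.Prime).pos
    set m := (p - 1) / 2
    have hm : 2 * m + 1 = p := by obtain ⟨m', rfl⟩ := hodd; omega
    obtain ⟨q, d, hd, rfl⟩ : ∃ q d, d < p ∧ k = p * q + d :=
      ⟨k / p, k % p, Nat.mod_lt k hp, (Nat.div_add_mod k p).symm⟩
    have hq : q < p ^ r := by
      rw [pow_succ'] at hk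
      exact (Nat.mul_lt_mul_left hp).1 (by omega)
    have hpow : (-4 : ZMod p) ^ (p * q + d) = (-4) ^ q * (-4) ^ d := by
      rw [pow_add, pow_mul, ZMod.pow_card]
    rw [pow_succ_sub_one_div_two hodd, choose_mul_add_mul_add (by omega) hd, hpow]
    rcases le_or_gt d m with hdm | hmd
    · have hN : ((2 * m + 1 : ℕ) : ZMod p) = 0 := by rw [hm, ZMod.natCast_self]
      push_cast at hN
      rw [show 2 * (p * q + d) = p * (2 * q) + 2 * d by ring, choose_mul_add_mul_add (by omega) hd,
        ih hq, choose_two_mul_eq_neg_four_pow_mul_choose_of_lt hN hd]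
      ring
    · -- `d + d` carries past `p`, so the lowest-digit factor vanishes on both sides
      have hcarry : 2 * (p * q + d) = p * (2 * q + 1) + (2 * d - p) := by
        rw [Nat.mul_add_one, Nat.mul_left_comm]
        omega
      rw [hcarry, choose_mul_add_mul_add (by omega) hd,
        choose_eq_zero_of_lt (by omega : 2 * d - p < d), choose_eq_zero_of_lt hmd]
      simp

namespace PadicInt

variable {p : ℕ} [Fact p.Prime]

lemma natCast_dvd_iff_toZMod_eq_zero (x : ℤ_[p]) : (p : ℤ_[p]) ∣ x ↔ toZMod x = 0 := by
  rw [← Ideal.mem_span_singleton, ← maximalIdeal_eq_span_p, ← ker_toZMod, RingHom.mem_ker]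

lemma toZMod_ringInverse (x : ℤ_[p]) : toZMod (Ring.inverse x) = (toZMod x)⁻¹ := by
  by_cases hx : IsUnit x
  · obtain ⟨u, rfl⟩ := hx
    rw [Ring.inverse_unit]
    exact eq_inv_of_mul_eq_one_left (by rw [← map_mul, Units.inv_mul, map_one])
  · have : toZMod x = 0 := by
      rwa [← RingHom.mem_ker, ker_toZMod, IsLocalRing.mem_maximalIdeal, mem_nonunits_iff]
    rw [Ring.inverse_non_unit _ hx, map_zero, this, inv_zero]

end PadicInt

theorem sun_tauraso_congruence_general (p : ℕ) [hp : Fact p.Prime] (hodd : Odd p) (r : ℕ) :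
    ((p : ℤ_[p])) ∣
      (∑ k ∈ Finset.range (p ^ r),
          Ring.inverse ((2 : ℤ_[p]) ^ k) * (Nat.choose (2 * k) k : ℤ_[p])) -
        (-1) ^ ((p ^ r - 1) / 2) := by
  rw [PadicInt.natCast_dvd_iff_toZMod_eq_zero, map_sub, sub_eq_zero, map_sum, map_pow, map_neg,
    map_one]
  have h2 : (2 : ZMod p) ≠ 0 := by
    rw [← Nat.cast_ofNat, Ne, ZMod.natCast_eq_zero_iff]
    intro h
    obtain rfl := (Nat.prime_dvd_prime_iff_eq hp.out Nat.prime_two).1 h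
    exact Nat.not_odd_iff_even.2 even_two hodd
  calc ∑ k ∈ range (p ^ r), PadicInt.toZMod (Ring.inverse (2 ^ k) * ((2 * k).choose k : ℤ_[p]))
      = ∑ k ∈ range (p ^ r), (-2 : ZMod p) ^ k * ((p ^ r - 1) / 2).choose k := by
        refine sum_congr rfl fun k hk => ?_
        rw [map_mul, PadicInt.toZMod_ringInverse, map_pow, map_ofNat, map_natCast,
          choose_two_mul_eq_neg_four_pow_mul_choose hodd r (mem_range.1 hk),
          show (-4 : ZMod p) = -2 * 2 by norm_num, mul_pow]
        field_simp
    _ = (-1) ^ ((p ^ r - 1) / 2) := by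
        rw [sum_range_pow_mul_choose_of_lt _ (by have := pow_pos hp.out.pos r; omega)]
        norm_num

/-- Sun–Tauraso: for any odd prime `p` and positive integer `r`,
`∑_{k=0}^{p^r-1} (1/2^k) * C(2k,k) ≡ (-1)^((p^r-1)/2) (mod p)` in the `p`-adic integers. -/
theorem sun_tauraso_congruence (p : ℕ) [hp : Fact p.Prime] (hodd : Odd p) (r : ℕ) (hr : 0 < r) :
    ((p : ℤ_[p])) ∣
      (∑ k ∈ Finset.range (p ^ r),
          Ring.inverse ((2 : ℤ_[p]) ^ k) * (Nat.choose (2 * k) k : ℤ_[p])) -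
        (-1) ^ ((p ^ r - 1) / 2) :=
  sun_tauraso_congruence_general p (hp := hp) hodd r
end

section
/- Carlitz's identity: for all n ≥ 0 and parameters a, b, q, we have sum_{k=0}^{n} ((a;q)_k (b;q)_k / (q;q)_k) * (-ab)^(n-k) * q^((n-k)(n+k-1)/2) = sum_{k=0}^{n} (a;q)_{n+1} * (-b)^k * q^(binomial(k,2)) / ((q;q)_k (q;q)_{n-k} (1 - a q^(n-k))), as an identity of rational functions in a, b, q. -/
/-!
Both sides satisfy `S (n+1) = -ab q^n S n + (a;q)_{n+1} (b;q)_{n+1} / (q;q)_{n+1}` with `S 0 = 1`.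
On the left this is only the shift of the exponent `(n-k)(n+k-1)/2` by `n`. On the right one
expands `(b;q)_{n+1} / (q;q)_{n+1}` by the finite `q`-binomial theorem and compares term by term.
-/

/-- The `q`-shifted factorial `(a; q)_m = (1-a)(1-aq)⋯(1-aq^(m-1))` in a field `F`. -/
def qPochF {F : Type*} [Field F] (a q : F) (m : ℕ) : F :=
  ∏ i ∈ Finset.range m, (1 - a * q ^ i)

open Finset

section QPochhammer

variable {F : Type*} [Field F]

@[simp] lemma qPochF_zero (a q : F) : qPochF a q 0 = 1 := prod_range_zero _

lemma qPochF_succ (a q : F) (m : ℕ) :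
    qPochF a q (m + 1) = qPochF a q m * (1 - a * q ^ m) :=
  prod_range_succ _ _

lemma qPochF_self_succ (q : F) (m : ℕ) :
    qPochF q q (m + 1) = qPochF q q m * (1 - q ^ (m + 1)) := by
  rw [qPochF_succ, ← pow_succ']

lemma qPochF_succ_eq_one_sub_mul (a q : F) (m : ℕ) :
    qPochF a q (m + 1) = (1 - a) * qPochF (a * q) q m := by
  simp only [qPochF, prod_range_succ', pow_zero, mul_one, pow_succ', mul_assoc, mul_comm]

lemma qPochF_ne_zero_of_le {a q : F} {m n : ℕ} (h : qPochF a q n ≠ 0) (hmn : m ≤ n) :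
    qPochF a q m ≠ 0 := by
  rw [qPochF, prod_ne_zero_iff] at h ⊢
  exact fun i hi => h i (mem_range.2 ((mem_range.1 hi).trans_le hmn))

lemma one_sub_pow_succ_ne_zero {q : F} {m : ℕ} (h : qPochF q q (m + 1) ≠ 0) :
    1 - q ^ (m + 1) ≠ 0 :=
  right_ne_zero_of_mul (qPochF_self_succ q m ▸ h)

end QPochhammer

lemma Nat.choose_two_succ (k : ℕ) : (k + 1).choose 2 = k.choose 2 + k := by
  rw [Nat.choose_succ_succ', Nat.choose_one_right, add_comm]

section QBinomial

variable {F : Type*} [Field F]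

/-- `∑ₖ [n, k]_q (-b)^k q^(k choose 2)`, divided by `(q; q)_n`. -/
def qBinomialSum (b q : F) (n : ℕ) : F :=
  ∑ k ∈ range (n + 1), (-b) ^ k * q ^ k.choose 2 / (qPochF q q k * qPochF q q (n - k))

lemma qBinomialSum_succ_mul {b q : F} {n : ℕ} (hq : qPochF q q (n + 1) ≠ 0) :
    qBinomialSum b q (n + 1) * (1 - q ^ (n + 1)) = (1 - b) * qBinomialSum (b * q) q n := by
  have hq' : ∀ k ≤ n + 1, qPochF q q k ≠ 0 := fun k => qPochF_ne_zero_of_le hq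
  -- `1 - q^(n+1) = (1 - q^k) + q^k (1 - q^(n+1-k))` splits the sum into two copies of the
  -- sum for `n` and `bq`, shifted by one index against each other.
  have hsplit : ∀ k ∈ range (n + 2),
      1 - q ^ (n + 1) = (1 - q ^ k) + q ^ k * (1 - q ^ (n + 1 - k)) := by
    intro k hk
    rw [mul_sub, mul_one, ← pow_add, Nat.add_sub_cancel' (Nat.lt_succ_iff.1 (mem_range.1 hk))]
    ring
  have hshift : ∀ j ∈ range (n + 1),
      (-b) ^ (j + 1) * q ^ (j + 1).choose 2 /
          (qPochF q q (j + 1) * qPochF q q (n + 1 - (j + 1))) * (1 - q ^ (j + 1)) =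
        -b * ((-(b * q)) ^ j * q ^ j.choose 2 / (qPochF q q j * qPochF q q (n - j))) := by
    intro j hj
    have hj := mem_range.1 hj
    have h1 := hq' j (by omega)
    have h2 := hq' (n - j) (by omega)
    have h3 := one_sub_pow_succ_ne_zero (hq' (j + 1) (by omega))
    rw [Nat.add_sub_add_right, qPochF_self_succ, Nat.choose_two_succ]
    field_simp
    ring
  have hkeep : ∀ k ∈ range (n + 1),
      (-b) ^ k * q ^ k.choose 2 / (qPochF q q k * qPochF q q (n + 1 - k)) *
        (q ^ k * (1 - q ^ (n + 1 - k))) =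
        (-(b * q)) ^ k * q ^ k.choose 2 / (qPochF q q k * qPochF q q (n - k)) := by
    intro k hk
    have hk := mem_range.1 hk
    have h1 := hq' k (by omega)
    have h2 := hq' (n - k) (by omega)
    have h3 := one_sub_pow_succ_ne_zero (hq' (n - k + 1) (by omega))
    rw [show n + 1 - k = n - k + 1 by omega, qPochF_self_succ]
    field_simp
    ring
  rw [qBinomialSum, sum_mul, sum_congr rfl fun k hk => by rw [hsplit k hk, mul_add],
    sum_add_distrib, sum_range_succ', sum_range_succ _ (n + 1), sum_congr rfl hshift,
    sum_congr rfl hkeep, ← mul_sum]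
  simp only [pow_zero, sub_self, mul_zero, Nat.sub_self, add_zero, qBinomialSum]
  ring

lemma qPochF_div_qPochF_eq_qBinomialSum {q : F} {n : ℕ} (hq : qPochF q q n ≠ 0) (b : F) :
    qPochF b q n / qPochF q q n = qBinomialSum b q n := by
  induction n generalizing b with
  | zero => simp [qBinomialSum]
  | succ n ih =>
    have h := one_sub_pow_succ_ne_zero hq
    rw [← mul_left_inj' h, qBinomialSum_succ_mul hq, ← ih (qPochF_ne_zero_of_le hq n.le_succ),
      qPochF_succ_eq_one_sub_mul, qPochF_self_succ]
    field_simp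

end QBinomial

lemma carlitz_exponent_succ {n k : ℕ} (hk : k ≤ n) :
    (n + 1 - k) * (n + 1 + k - 1) / 2 = (n - k) * (n + k - 1) / 2 + n := by
  have h : (n + 1 - k) * (n + 1 + k - 1) = (n - k) * (n + k - 1) + n * 2 := by
    rcases Nat.eq_zero_or_pos n with rfl | hn
    · obtain rfl : k = 0 := by omega
      rfl
    · zify [hk, hk.trans n.le_succ, show 1 ≤ n + k by omega, show 1 ≤ n + 1 + k by omega]
      ring
  rw [h, Nat.add_mul_div_right _ _ two_pos]

section Carlitz

variable {F : Type*} [Field F]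

def carlitzLHS (a b q : F) (n : ℕ) : F :=
  ∑ k ∈ range (n + 1),
    qPochF a q k * qPochF b q k / qPochF q q k * (-(a * b)) ^ (n - k) *
      q ^ ((n - k) * (n + k - 1) / 2)

def carlitzRHS (a b q : F) (n : ℕ) : F :=
  ∑ k ∈ range (n + 1),
    qPochF a q (n + 1) * (-b) ^ k * q ^ (Nat.choose k 2) /
      (qPochF q q k * qPochF q q (n - k) * (1 - a * q ^ (n - k)))

lemma carlitzLHS_zero (a b q : F) : carlitzLHS a b q 0 = 1 := by
  simp [carlitzLHS]

lemma carlitzRHS_zero {a : F} (b q : F) (ha : 1 - a ≠ 0) : carlitzRHS a b q 0 = 1 := by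
  simp [carlitzRHS, qPochF_succ, ha]

lemma carlitzLHS_succ (a b q : F) (n : ℕ) :
    carlitzLHS a b q (n + 1) =
      -(a * b) * q ^ n * carlitzLHS a b q n +
        qPochF a q (n + 1) * qPochF b q (n + 1) / qPochF q q (n + 1) := by
  rw [carlitzLHS, sum_range_succ, carlitzLHS, mul_sum]
  congr 1
  · refine sum_congr rfl fun k hk => ?_
    have hk : k ≤ n := Nat.lt_succ_iff.1 (mem_range.1 hk)
    rw [carlitz_exponent_succ hk, pow_add, Nat.sub_add_comm hk, pow_succ]
    ring
  · simp

lemma carlitzRHS_term_succ {a q : F} (b A : F) {n k : ℕ} (hk : k ≤ n)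
    (hq : qPochF q q (n + 1) ≠ 0) (ha : 1 - a * q ^ (n - k) ≠ 0) :
    A * (1 - a * q ^ (n + 1)) * (-b) ^ (k + 1) * q ^ (k + 1).choose 2 /
        (qPochF q q (k + 1) * qPochF q q (n - k) * (1 - a * q ^ (n - k))) =
      -(a * b) * q ^ n * (A * (-b) ^ k * q ^ k.choose 2 /
        (qPochF q q k * qPochF q q (n - k) * (1 - a * q ^ (n - k)))) +
      A * ((-b) ^ (k + 1) * q ^ (k + 1).choose 2 / (qPochF q q (k + 1) * qPochF q q (n - k))) := by
  obtain ⟨m, rfl⟩ := Nat.exists_eq_add_of_le hk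
  have h1 := qPochF_ne_zero_of_le hq (by omega : k ≤ k + m + 1)
  have h2 := qPochF_ne_zero_of_le hq (by omega : m ≤ k + m + 1)
  have h3 := one_sub_pow_succ_ne_zero (qPochF_ne_zero_of_le hq (by omega : k + 1 ≤ k + m + 1))
  rw [Nat.add_sub_cancel_left] at ha ⊢
  rw [qPochF_self_succ, Nat.choose_two_succ]
  field_simp
  ring

lemma carlitzRHS_succ {a q : F} (b : F) {n : ℕ} (hq : qPochF q q (n + 1) ≠ 0)
    (ha : ∀ k ≤ n + 1, 1 - a * q ^ k ≠ 0) :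
    carlitzRHS a b q (n + 1) =
      -(a * b) * q ^ n * carlitzRHS a b q n +
        qPochF a q (n + 1) * qPochF b q (n + 1) / qPochF q q (n + 1) := by
  rw [mul_div_assoc, qPochF_div_qPochF_eq_qBinomialSum hq, qBinomialSum, carlitzRHS, carlitzRHS,
    sum_range_succ', sum_range_succ' _ (n + 1), mul_add, mul_sum, mul_sum, ← add_assoc,
    ← sum_add_distrib]
  congr 1
  · refine sum_congr rfl fun k hk => ?_
    rw [Nat.add_sub_add_right, qPochF_succ a q (n + 1)]
    have hk : k ≤ n := Nat.lt_succ_iff.1 (mem_range.1 hk)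
    exact carlitzRHS_term_succ b _ hk hq (ha _ (by omega))
  · have h := ha (n + 1) le_rfl
    simp only [qPochF_succ a q (n + 1), Nat.sub_zero, pow_zero, qPochF_zero]
    field_simp

end Carlitz

/-- Carlitz's identity, as an identity of rational functions in `a, b, q`
(stated for elements of an arbitrary field with the denominators nonvanishing). -/
theorem carlitz_identity {F : Type*} [Field F] (n : ℕ) (a b q : F)
    (hq : ∀ k ≤ n, qPochF q q k ≠ 0) (ha : ∀ k ≤ n, 1 - a * q ^ k ≠ 0) :
    ∑ k ∈ Finset.range (n + 1),
        qPochF a q k * qPochF b q k / qPochF q q k * (-(a * b)) ^ (n - k) *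
          q ^ ((n - k) * (n + k - 1) / 2) =
      ∑ k ∈ Finset.range (n + 1),
        qPochF a q (n + 1) * (-b) ^ k * q ^ (Nat.choose k 2) /
          (qPochF q q k * qPochF q q (n - k) * (1 - a * q ^ (n - k))) := by
  change carlitzLHS a b q n = carlitzRHS a b q n
  induction n with
  | zero => rw [carlitzLHS_zero, carlitzRHS_zero b q (by simpa using ha 0 le_rfl)]
  | succ n ih =>
    rw [carlitzLHS_succ, carlitzRHS_succ b (hq (n + 1) le_rfl) ha,
      ih (fun k hk => hq k (by omega)) (fun k hk => ha k (by omega))]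
end

section
/- Let n be a positive integer. Then the central q-binomial coefficient [2n choose n]_q satisfies [2n choose n]_q ≡ 2 - n(1 - q^n) (mod Φ_n(q)^2). -/
open Finset Polynomial

/-- The `q`-shifted factorial `(a; q)_m = (1-a)(1-aq)⋯(1-aq^(m-1))` in `ℚ(q)`. -/
noncomputable def qPoch (a q : RatFunc ℚ) (m : ℕ) : RatFunc ℚ :=
  ∏ i ∈ Finset.range m, (1 - a * q ^ i)

/-- Congruence `A ≡ B (mod Φ_n(q)^e)` in the localization of `ℚ[q]` at `(Φ_n(q))`:
the difference, cleared of a denominator coprime to `Φ_n(q)`, is divisible by `Φ_n(q)^e`. -/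
def qCongruent (n e : ℕ) (A B : RatFunc ℚ) : Prop :=
  ∃ f g : Polynomial ℚ, ¬ Polynomial.cyclotomic n ℚ ∣ g ∧
    (A - B) * algebraMap (Polynomial ℚ) (RatFunc ℚ) g =
      algebraMap (Polynomial ℚ) (RatFunc ℚ) (Polynomial.cyclotomic n ℚ ^ e * f)

/-!
Write `t = 1 - qⁿ`. Since `1 - q^(n+i) = (1 - qⁱ) + qⁱ t`,
`[2n choose n]_q = (2 - t) ∏_{0<i<n} (1 + t qⁱ / (1 - qⁱ)) ≡ (2 - t) (1 + t ∑_{0<i<n} qⁱ / (1 - qⁱ))`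
modulo `t²`. At a primitive `n`-th root of unity the terms `i` and `n - i` of the sum add up
to `-1`, so twice the sum is `≡ -(n - 1)` modulo `Φₙ`; as `Φₙ ∣ t`, the right-hand side is
`≡ 2 - n t` modulo `Φₙ²`. Everything is carried out on polynomials after clearing the
denominator `(q;q)ₙ²`, which `Φₙ` divides exactly twice.
-/

theorem sq_dvd_prod_add_mul_sub {ι R : Type*} [CommRing R] [DecidableEq ι] (s : Finset ι)
    (a c : ι → R) (t : R) :
    t ^ 2 ∣ ∏ i ∈ s, (a i + t * c i) -
      (∏ i ∈ s, a i + t * ∑ i ∈ s, c i * ∏ j ∈ s.erase i, a j) := by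
  induction s using Finset.induction_on with
  | empty => simp
  | @insert k s hk ih =>
    obtain ⟨r, hr⟩ := ih
    have herase : ∑ i ∈ s, c i * ∏ j ∈ (insert k s).erase i, a j
        = a k * ∑ i ∈ s, c i * ∏ j ∈ s.erase i, a j := by
      rw [mul_sum]
      refine sum_congr rfl fun i hi => ?_
      rw [erase_insert_of_ne (ne_of_mem_of_not_mem hi hk).symm,
        prod_insert fun h => hk (mem_of_mem_erase h)]
      ring
    refine ⟨c k * ∑ i ∈ s, c i * ∏ j ∈ s.erase i, a j + (a k + t * c k) * r, ?_⟩
    rw [prod_insert hk, prod_insert hk, sum_insert hk, erase_insert hk, herase]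
    linear_combination (a k + t * c k) * hr

theorem div_one_sub_add_div_one_sub_of_mul_eq_one {K : Type*} [Field K] {x y : K}
    (hxy : x * y = 1) (hx : x ≠ 1) (hy : y ≠ 1) : x / (1 - x) + y / (1 - y) = -1 := by
  rw [div_add_div _ _ (sub_ne_zero.2 hx.symm) (sub_ne_zero.2 hy.symm),
    div_eq_iff (mul_ne_zero (sub_ne_zero.2 hx.symm) (sub_ne_zero.2 hy.symm))]
  linear_combination (-1 : K) * hxy

theorem IsPrimitiveRoot.two_mul_sum_pow_div_one_sub_pow {K : Type*} [Field K] {ζ : K} {m : ℕ}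
    (hζ : IsPrimitiveRoot ζ (m + 1)) :
    2 * ∑ i ∈ range m, ζ ^ (i + 1) / (1 - ζ ^ (i + 1)) = -m := by
  set f : ℕ → K := fun i => ζ ^ (i + 1) / (1 - ζ ^ (i + 1))
  have hpair : ∀ i ∈ range m, f i + f (m - 1 - i) = -1 := by
    intro i hi
    have hi := mem_range.1 hi
    refine div_one_sub_add_div_one_sub_of_mul_eq_one ?_
      (hζ.pow_ne_one_of_pos_of_lt (by omega) (by omega))
      (hζ.pow_ne_one_of_pos_of_lt (by omega) (by omega))
    rw [← pow_add, show i + 1 + (m - 1 - i + 1) = m + 1 by omega, hζ.pow_eq_one]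
  calc 2 * ∑ i ∈ range m, f i = ∑ i ∈ range m, (f i + f (m - 1 - i)) := by
        rw [sum_add_distrib, sum_range_reflect f m]; ring
    _ = -m := by simp [sum_congr rfl hpair]

theorem cyclotomic_dvd_iff_aeval_eq_zero {K : Type*} [Field K] [CharZero K] {n : ℕ} {ζ : K}
    (hζ : IsPrimitiveRoot ζ n) (hn : 0 < n) {p : ℚ[X]} :
    cyclotomic n ℚ ∣ p ↔ aeval ζ p = 0 := by
  rw [cyclotomic_eq_minpoly_rat hζ hn]
  exact minpoly.dvd_iff

noncomputable def qFactorial (m : ℕ) : ℚ[X] :=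
  ∏ i ∈ range m, (1 - X ^ (i + 1))

theorem qPoch_X_X (m : ℕ) :
    qPoch RatFunc.X RatFunc.X m = algebraMap ℚ[X] (RatFunc ℚ) (qFactorial m) := by
  simp only [qPoch, qFactorial, map_prod, map_sub, map_one, map_pow, RatFunc.algebraMap_X]
  exact prod_congr rfl fun i _ => by ring

theorem aeval_qFactorial {A : Type*} [CommRing A] [Algebra ℚ A] (x : A) (m : ℕ) :
    aeval x (qFactorial m) = ∏ i ∈ range m, (1 - x ^ (i + 1)) := by
  simp [qFactorial, map_prod]

theorem qFactorial_succ (m : ℕ) : qFactorial (m + 1) = qFactorial m * (1 - X ^ (m + 1)) :=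
  prod_range_succ _ m

theorem qFactorial_add (m k : ℕ) :
    qFactorial (m + k) =
      qFactorial m * ∏ i ∈ range k, ((1 - X ^ (i + 1)) + (1 - X ^ m) * X ^ (i + 1)) := by
  rw [qFactorial, prod_range_add]
  exact congrArg _ (prod_congr rfl fun i _ => by ring)

theorem cyclotomic_not_dvd_qFactorial (m : ℕ) : ¬ cyclotomic (m + 1) ℚ ∣ qFactorial m := by
  have hζ := Complex.isPrimitiveRoot_exp (m + 1) m.succ_ne_zero
  rw [cyclotomic_dvd_iff_aeval_eq_zero hζ m.succ_pos, aeval_qFactorial, prod_eq_zero_iff]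
  rintro ⟨i, hi, hzero⟩
  exact hζ.pow_ne_one_of_pos_of_lt i.succ_ne_zero (by simpa using hi) (sub_eq_zero.1 hzero).symm

theorem cyclotomic_dvd_two_mul_sum_add (m : ℕ) :
    cyclotomic (m + 1) ℚ ∣
      (2 : ℚ[X]) * ∑ i ∈ range m, X ^ (i + 1) * ∏ j ∈ (range m).erase i, (1 - X ^ (j + 1)) +
        (m : ℚ[X]) * qFactorial m := by
  have hζ := Complex.isPrimitiveRoot_exp (m + 1) m.succ_ne_zero
  rw [cyclotomic_dvd_iff_aeval_eq_zero hζ m.succ_pos]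
  set ζ := Complex.exp (2 * Real.pi * Complex.I / (m + 1 : ℕ))
  have hterm : ∀ i ∈ range m, ζ ^ (i + 1) * ∏ j ∈ (range m).erase i, (1 - ζ ^ (j + 1))
      = (∏ j ∈ range m, (1 - ζ ^ (j + 1))) * (ζ ^ (i + 1) / (1 - ζ ^ (i + 1))) := by
    intro i hi
    have hne : 1 - ζ ^ (i + 1) ≠ 0 := sub_ne_zero.2
      (hζ.pow_ne_one_of_pos_of_lt i.succ_ne_zero (by simpa using hi)).symm
    rw [← mul_prod_erase _ _ hi]
    field_simp
  simp only [map_add, map_mul, map_sum, map_prod, map_sub, map_one, map_pow, aeval_X,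
    map_ofNat, map_natCast, aeval_qFactorial]
  rw [sum_congr rfl hterm, ← mul_sum]
  linear_combination (∏ j ∈ range m, (1 - ζ ^ (j + 1))) * hζ.two_mul_sum_pow_div_one_sub_pow

theorem qFactorial_eq_cyclotomic_mul (m : ℕ) :
    ∃ g, qFactorial (m + 1) = cyclotomic (m + 1) ℚ * g ∧ ¬ cyclotomic (m + 1) ℚ ∣ g := by
  have hprime : Prime (cyclotomic (m + 1) ℚ) := (cyclotomic.irreducible_rat m.succ_pos).prime
  obtain ⟨v, hv⟩ := cyclotomic.dvd_X_pow_sub_one (m + 1) ℚ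
  have hv_coprime : ¬ cyclotomic (m + 1) ℚ ∣ v := by
    rintro ⟨w, rfl⟩
    have hsq : Squarefree (X ^ (m + 1) - 1 : ℚ[X]) := by
      simpa using (separable_X_pow_sub_C (1 : ℚ) (by positivity) one_ne_zero).squarefree
    exact hprime.not_isUnit (hsq _ ⟨w, by rw [hv]; ring⟩)
  refine ⟨-(qFactorial m * v), by rw [qFactorial_succ]; linear_combination (-qFactorial m) * hv, ?_⟩
  rw [dvd_neg]
  exact fun h => (hprime.dvd_or_dvd h).elim (cyclotomic_not_dvd_qFactorial m) hv_coprime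

theorem cyclotomic_pow_four_dvd (m : ℕ) :
    cyclotomic (m + 1) ℚ ^ 4 ∣
      qFactorial (2 * (m + 1)) - (2 - ((m + 1 : ℕ) : ℚ[X]) * (1 - X ^ (m + 1))) *
        qFactorial (m + 1) ^ 2 := by
  set Φ := cyclotomic (m + 1) ℚ
  set t : ℚ[X] := 1 - X ^ (m + 1)
  set D := qFactorial m
  set T : ℚ[X] := ∑ i ∈ range m, X ^ (i + 1) * ∏ j ∈ (range m).erase i, (1 - X ^ (j + 1))
  set E := ∏ i ∈ range m, ((1 - X ^ (i + 1)) + t * X ^ (i + 1)) - (D + t * T)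
  have hΦt : Φ ∣ t := by
    rw [← dvd_neg, neg_sub]
    exact cyclotomic.dvd_X_pow_sub_one (m + 1) ℚ
  have hE : Φ ^ 2 ∣ E :=
    (pow_dvd_pow_of_dvd hΦt 2).trans (sq_dvd_prod_add_mul_sub _ _ (fun i => X ^ (i + 1)) t)
  have hbracket : Φ ^ 2 ∣ (2 - t) * E + t * (2 * T + m * D) - t ^ 2 * T :=
    dvd_sub (dvd_add (dvd_mul_of_dvd_right hE _)
        (by rw [sq]; exact mul_dvd_mul hΦt (cyclotomic_dvd_two_mul_sum_add m)))
      (dvd_mul_of_dvd_left (pow_dvd_pow_of_dvd hΦt 2) _)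
  calc Φ ^ 4 = Φ ^ 2 * Φ ^ 2 := by ring
    _ ∣ t ^ 2 * (D * ((2 - t) * E + t * (2 * T + m * D) - t ^ 2 * T)) :=
      mul_dvd_mul (pow_dvd_pow_of_dvd hΦt 2) (dvd_mul_of_dvd_right hbracket _)
    -- `(q;q)_{2n} = D t · P · t (2 - t)` with `P = D + t T + E`, and `(q;q)ₙ = D t`
    _ = _ := by
      rw [show 2 * (m + 1) = (m + 1) + (m + 1) by ring, qFactorial_add, prod_range_succ,
        qFactorial_succ]
      simp only [E, T, D, t]
      push_cast
      ring

theorem qCongruent_of_dvd {n e k : ℕ} {N D B g : ℚ[X]} (hD : D = cyclotomic n ℚ ^ k * g)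
    (hg : ¬ cyclotomic n ℚ ∣ g) (h : cyclotomic n ℚ ^ (k + e) ∣ N - B * D) :
    qCongruent n e (algebraMap ℚ[X] (RatFunc ℚ) N / algebraMap ℚ[X] (RatFunc ℚ) D)
      (algebraMap ℚ[X] (RatFunc ℚ) B) := by
  obtain ⟨F, hF⟩ := h
  have hg0 : g ≠ 0 := by
    rintro rfl
    exact hg (dvd_zero _)
  have hΦ := RatFunc.algebraMap_ne_zero (cyclotomic_ne_zero n ℚ)
  have hg' := RatFunc.algebraMap_ne_zero hg0
  refine ⟨F, g, hg, ?_⟩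
  rw [sub_eq_iff_eq_add] at hF
  subst hF hD
  simp only [map_add, map_mul, map_pow]
  field_simp
  ring

/-- For every positive integer `n`, the central Gaussian binomial coefficient satisfies
`[2n choose n]_q ≡ 2 - n(1 - qⁿ) (mod Φ_n(q)²)`. -/
theorem central_qbinom_congruence (n : ℕ) (hn : 0 < n) :
    qCongruent n 2
      (qPoch RatFunc.X RatFunc.X (2 * n) / (qPoch RatFunc.X RatFunc.X n) ^ 2)
      (2 - (n : RatFunc ℚ) * (1 - RatFunc.X ^ n)) := by
  obtain ⟨m, rfl⟩ := Nat.exists_eq_add_one_of_ne_zero hn.ne'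
  obtain ⟨g, hD, hg⟩ := qFactorial_eq_cyclotomic_mul m
  have hprime : Prime (cyclotomic (m + 1) ℚ) := (cyclotomic.irreducible_rat m.succ_pos).prime
  have hB : 2 - ((m + 1 : ℕ) : RatFunc ℚ) * (1 - RatFunc.X ^ (m + 1)) =
      algebraMap ℚ[X] (RatFunc ℚ) (2 - ((m + 1 : ℕ) : ℚ[X]) * (1 - X ^ (m + 1))) := by
    simp only [map_sub, map_mul, map_one, map_pow, map_natCast, map_ofNat, RatFunc.algebraMap_X]
  rw [qPoch_X_X, qPoch_X_X, ← map_pow, hB]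
  exact qCongruent_of_dvd (k := 2) (g := g ^ 2) (by rw [hD]; ring)
    (fun h => hg (hprime.dvd_of_dvd_pow h)) (cyclotomic_pow_four_dvd m)
end

section
/- Specialization of Carlitz's identity: for every positive integer n, sum_{k=0}^{n-1} ((q; q^2)_k (-1; q^2)_k / (q^2; q^2)_k) * q^((n-1)^2 - k^2) = sum_{k=0}^{n-1} (q; q^2)_n * q^(k^2 - k) / ((q^2; q^2)_k (q^2; q^2)_{n-k-1} (1 - q^(2n-2k-1))), as rational functions of q. -/
open Finset Polynomial

theorem Nat.sq_sub_self_eq_two_mul_choose_two (k : ℕ) : k ^ 2 - k = 2 * k.choose 2 := by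
  rw [Nat.choose_two_right, Nat.mul_div_cancel' (Nat.even_mul_pred_self k).two_dvd, sq,
    Nat.mul_sub_one]

theorem RatFunc.X_pow_ne_one {K : Type*} [Field K] {m : ℕ} (hm : m ≠ 0) :
    (RatFunc.X : RatFunc K) ^ m ≠ 1 := by
  intro h
  have := congrArg RatFunc.intDegree h
  rw [← RatFunc.algebraMap_X, ← map_pow, RatFunc.intDegree_polynomial, RatFunc.intDegree_one,
    Polynomial.natDegree_X_pow] at this
  exact hm (by exact_mod_cast this)

theorem qPoch_zero (a q : RatFunc ℚ) : qPoch a q 0 = 1 := prod_range_zero _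

theorem qPoch_succ (a q : RatFunc ℚ) (m : ℕ) :
    qPoch a q (m + 1) = qPoch a q m * (1 - a * q ^ m) :=
  prod_range_succ _ _

theorem qPoch_succ' (a q : RatFunc ℚ) (m : ℕ) :
    qPoch a q (m + 1) = (1 - a) * qPoch (a * q) q m := by
  simp only [qPoch, prod_range_succ', pow_succ, pow_zero, mul_one, mul_assoc, mul_comm]

theorem qPoch_ne_zero {a q : RatFunc ℚ} (h : ∀ i, a * q ^ i ≠ 1) (m : ℕ) : qPoch a q m ≠ 0 :=
  prod_ne_zero_iff.mpr fun i _ ↦ sub_ne_zero.mpr (h i).symm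

/-- The Gaussian binomial coefficient `[n, k]_p`, defined by the `q`-Pascal rule so that no
division is involved. -/
noncomputable def qBinom (p : RatFunc ℚ) : ℕ → ℕ → RatFunc ℚ
  | _, 0 => 1
  | 0, _ + 1 => 0
  | n + 1, k + 1 => qBinom p n k + p ^ (k + 1) * qBinom p n (k + 1)

theorem qBinom_eq_zero_of_lt (p : RatFunc ℚ) {n k : ℕ} (h : n < k) : qBinom p n k = 0 := by
  induction n generalizing k with
  | zero => obtain ⟨k, rfl⟩ := Nat.exists_eq_add_one_of_ne_zero h.ne'; rfl
  | succ n ih =>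
    obtain ⟨k, rfl⟩ := Nat.exists_eq_add_one_of_ne_zero (by omega : k ≠ 0)
    rw [qBinom, ih (by omega), ih (by omega), mul_zero, add_zero]

theorem qBinom_self (p : RatFunc ℚ) (n : ℕ) : qBinom p n n = 1 := by
  induction n with
  | zero => rfl
  | succ n ih => rw [qBinom, ih, qBinom_eq_zero_of_lt p n.lt_succ_self, mul_zero, add_zero]

theorem qBinom_add_mul_qPoch (p : RatFunc ℚ) (i j : ℕ) :
    qBinom p (i + j) i * (qPoch p p i * qPoch p p j) = qPoch p p (i + j) := by
  induction i generalizing j with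
  | zero => simp [qBinom, qPoch_zero]
  | succ i ih =>
    induction j with
    | zero => simp [qBinom_self, qPoch_zero]
    | succ j ihj =>
      have h₁ := ih (j + 1)
      rw [← add_assoc] at h₁
      rw [add_right_comm] at ihj
      rw [show i + 1 + (j + 1) = i + j + 1 + 1 by omega, qBinom, qPoch_succ _ _ (i + j + 1)]
      rw [qPoch_succ p p i] at ihj ⊢
      rw [qPoch_succ p p j] at h₁ ⊢
      linear_combination (1 - p * p ^ i) * h₁ + p ^ (i + 1) * (1 - p * p ^ j) * ihj

theorem qPoch_neg_eq_sum_qBinom (p z : RatFunc ℚ) (n : ℕ) :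
    qPoch (-z) p n = ∑ j ∈ range (n + 1), p ^ j.choose 2 * z ^ j * qBinom p n j := by
  induction n generalizing z with
  | zero => simp [qPoch_zero, qBinom]
  | succ n ih =>
    obtain ⟨a, ha⟩ : ∃ a : ℕ → RatFunc ℚ, ∀ j, a j = p ^ (j + 1).choose 2 * z ^ j * qBinom p n j :=
      ⟨_, fun _ ↦ rfl⟩
    have hchoose (j : ℕ) : p ^ (j + 1).choose 2 = p ^ j.choose 2 * p ^ j := by
      rw [Nat.choose_succ_succ', Nat.choose_one_right, pow_add, mul_comm]
    have hstep (j : ℕ) :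
        p ^ (j + 1).choose 2 * z ^ (j + 1) * qBinom p (n + 1) (j + 1) = z * a j + a (j + 1) := by
      rw [ha, ha, qBinom, hchoose (j + 1)]
      ring
    calc qPoch (-z) p (n + 1)
        = (1 + z) * ∑ j ∈ range (n + 1), a j := by
          rw [qPoch_succ', neg_mul, ih, sub_neg_eq_add]
          congr 1
          refine sum_congr rfl fun j _ ↦ ?_
          rw [ha, hchoose, mul_pow]
          ring
      _ = z * ∑ j ∈ range (n + 1), a j + ∑ j ∈ range (n + 2), a j := by
          rw [sum_range_succ a (n + 1), ha (n + 1), qBinom_eq_zero_of_lt p n.lt_succ_self]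
          ring
      _ = ∑ j ∈ range (n + 2), p ^ j.choose 2 * z ^ j * qBinom p (n + 1) j := by
          rw [eq_comm, sum_range_succ', sum_range_succ' a (n + 1), ha 0]
          simp only [hstep, sum_add_distrib, ← mul_sum]
          simp [qBinom]
          ring

theorem qPoch_neg_eq_sum_antidiagonal {p : RatFunc ℚ} (hp : ∀ k, qPoch p p k ≠ 0)
    (z : RatFunc ℚ) (n : ℕ) :
    qPoch (-z) p n = ∑ ij ∈ antidiagonal n,
      p ^ ij.1.choose 2 * z ^ ij.1 * qPoch p p n / (qPoch p p ij.1 * qPoch p p ij.2) := by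
  rw [qPoch_neg_eq_sum_qBinom, ← Nat.sum_antidiagonal_eq_sum_range_succ_mk
    (fun ij ↦ p ^ ij.1.choose 2 * z ^ ij.1 * qBinom p n ij.1)]
  refine sum_congr rfl fun ⟨i, j⟩ hij ↦ ?_
  obtain rfl : i + j = n := HasAntidiagonal.mem_antidiagonal.mp hij
  rw [← qBinom_add_mul_qPoch, ← mul_assoc, mul_div_cancel_right₀ _ (mul_ne_zero (hp i) (hp j))]

namespace Carlitz

noncomputable def term (q : RatFunc ℚ) (k : ℕ) : RatFunc ℚ :=
  qPoch q (q ^ 2) k * qPoch (-1) (q ^ 2) k / qPoch (q ^ 2) (q ^ 2) k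

/-- `lhs q n` and `rhs q n` are the two sides of the identity with `n + 1` terms; the terms of
`rhs q n` are indexed by `(k, m)` with `k + m = n`. -/
noncomputable def lhs (q : RatFunc ℚ) (n : ℕ) : RatFunc ℚ :=
  ∑ k ∈ range (n + 1), term q k * q ^ (n ^ 2 - k ^ 2)

noncomputable def rhs (q : RatFunc ℚ) (n : ℕ) : RatFunc ℚ :=
  ∑ km ∈ antidiagonal n, qPoch q (q ^ 2) (n + 1) * (q ^ 2) ^ km.1.choose 2 /
    (qPoch (q ^ 2) (q ^ 2) km.1 * qPoch (q ^ 2) (q ^ 2) km.2 * (1 - q ^ (2 * km.2 + 1)))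

theorem lhs_succ (q : RatFunc ℚ) (n : ℕ) :
    lhs q (n + 1) = q ^ (2 * n + 1) * lhs q n + term q (n + 1) := by
  rw [lhs, sum_range_succ, Nat.sub_self, pow_zero, mul_one, lhs, mul_sum]
  congr 1
  refine sum_congr rfl fun k hk ↦ ?_
  have hkn : k ^ 2 ≤ n ^ 2 := Nat.pow_le_pow_left (Nat.lt_succ_iff.mp (mem_range.mp hk)) 2
  rw [show (n + 1) ^ 2 - k ^ 2 = 2 * n + 1 + (n ^ 2 - k ^ 2) by rw [add_sq]; omega, pow_add]
  ring

section

variable {q : RatFunc ℚ} (hq : ∀ m ≠ 0, q ^ m ≠ 1)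
include hq

theorem one_sub_pow_ne_zero {m : ℕ} (hm : m ≠ 0) : 1 - q ^ m ≠ 0 :=
  sub_ne_zero.mpr (hq m hm).symm

theorem qPoch_sq_ne_zero (k : ℕ) : qPoch (q ^ 2) (q ^ 2) k ≠ 0 :=
  qPoch_ne_zero (fun i ↦ by rw [← pow_succ', ← pow_mul]; exact hq _ (by omega)) k

theorem term_eq_sum_antidiagonal (n : ℕ) :
    term q n = ∑ km ∈ antidiagonal n,
      qPoch q (q ^ 2) n * (q ^ 2) ^ km.1.choose 2 /
        (qPoch (q ^ 2) (q ^ 2) km.1 * qPoch (q ^ 2) (q ^ 2) km.2) := by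
  rw [term, qPoch_neg_eq_sum_antidiagonal (qPoch_sq_ne_zero hq), mul_sum, sum_div]
  refine sum_congr rfl fun km _ ↦ ?_
  have := qPoch_sq_ne_zero hq n
  field_simp
  ring

theorem rhs_succ (n : ℕ) : rhs q (n + 1) = q ^ (2 * n + 1) * rhs q n + term q (n + 1) := by
  rw [rhs, rhs, term_eq_sum_antidiagonal hq, Nat.sum_antidiagonal_succ, Nat.sum_antidiagonal_succ,
    mul_sum, add_comm (_ / _), add_left_comm (G := RatFunc ℚ), ← sum_add_distrib,
    add_comm (_ / _)]
  congr 1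
  · refine sum_congr rfl fun ⟨k, m⟩ hkm ↦ ?_
    obtain rfl : k + m = n := HasAntidiagonal.mem_antidiagonal.mp hkm
    dsimp only
    rw [qPoch_succ q _ (k + m + 1), qPoch_succ _ _ k, Nat.choose_succ_succ', Nat.choose_one_right,
      pow_add]
    have h₁ := qPoch_sq_ne_zero hq k
    have h₂ := qPoch_sq_ne_zero hq m
    have h₃ : 1 - q ^ 2 * (q ^ 2) ^ k ≠ 0 := by
      rw [← pow_succ', ← pow_mul]; exact one_sub_pow_ne_zero hq (by omega)
    have h₄ := one_sub_pow_ne_zero hq (m := 2 * m + 1) (by omega)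
    field_simp
    ring
  · have h₁ := qPoch_sq_ne_zero hq (n + 1)
    have h₂ := one_sub_pow_ne_zero hq (m := 2 * (n + 1) + 1) (by omega)
    simp only [qPoch_succ q _ (n + 1), qPoch_zero, ← pow_mul, ← pow_succ']
    field_simp

theorem lhs_eq_rhs (n : ℕ) : lhs q n = rhs q n := by
  induction n with
  | zero =>
    have := one_sub_pow_ne_zero hq one_ne_zero
    rw [pow_one] at this
    simp [lhs, rhs, term, qPoch_zero, qPoch_succ, this]
  | succ n ih => rw [lhs_succ, rhs_succ hq, ih]

end

end Carlitz

/-- Specialization of Carlitz's identity (`q → q²`, `a = q`, `b = -1`, `n → n-1`):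
for every positive integer `n`, as rational functions of `q`. -/
theorem carlitz_specialization_one (n : ℕ) (hn : 0 < n) :
    ∑ k ∈ Finset.range n,
        qPoch RatFunc.X (RatFunc.X ^ 2) k * qPoch (-1) (RatFunc.X ^ 2) k /
          qPoch (RatFunc.X ^ 2) (RatFunc.X ^ 2) k * RatFunc.X ^ ((n - 1) ^ 2 - k ^ 2) =
      ∑ k ∈ Finset.range n,
        qPoch RatFunc.X (RatFunc.X ^ 2) n * RatFunc.X ^ (k ^ 2 - k) /
          (qPoch (RatFunc.X ^ 2) (RatFunc.X ^ 2) k *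
            qPoch (RatFunc.X ^ 2) (RatFunc.X ^ 2) (n - k - 1) *
            (1 - RatFunc.X ^ (2 * n - 2 * k - 1))) := by
  obtain ⟨n, rfl⟩ := Nat.exists_eq_add_one_of_ne_zero hn.ne'
  have h := Carlitz.lhs_eq_rhs (fun _ hm ↦ RatFunc.X_pow_ne_one hm) n
  rw [Carlitz.lhs, Carlitz.rhs, Nat.sum_antidiagonal_eq_sum_range_succ_mk] at h
  rw [Nat.add_sub_cancel]
  refine h.trans (sum_congr rfl fun k hk ↦ ?_)
  have hkn : k ≤ n := Nat.lt_succ_iff.mp (mem_range.mp hk)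
  rw [show n + 1 - k - 1 = n - k by omega, show 2 * (n + 1) - 2 * k - 1 = 2 * (n - k) + 1 by omega,
    Nat.sq_sub_self_eq_two_mul_choose_two, pow_mul]
end

section
/- Let n be a positive odd integer. Then the term a_{n,(n-1)/2} := (q;q^2)_n * q^((n^2-4n+3)/4) * [n-1 choose (n-1)/2]_{q^2} / ((1-q^n)(q^2;q^2)_{n-1}) satisfies a_{n,(n-1)/2} ≡ (-1)^((n-1)/2) * q^(1-n) * [2n choose n]_q / (1 + q^n) (mod Φ_n(q)^2). -/
/-!
Write `n = 2k + 1`. After cancelling common factors,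
`a_{n,k} = (q;q²)_k (q^{n+2};q²)_k q^{k²-k} / (q²;q²)_k²`, while the right-hand side is
`(-1)^k q^{-2k} (q^{n+1};q²)_k (q^{n+2};q²)_k / ((q;q²)_k (q²;q²)_k)`. So the claim reduces to
`(-1)^k q^{k²} (q^{n+1};q²)_k (q²;q²)_k ≡ q^{nk} (q;q²)_k²  (mod (qⁿ - 1)²)`,
which is the `q`-Morley congruence with denominators cleared. Reflecting the indices,
`(-1)^k q^{k²} (q²;q²)_k = ∏_{i<k} (qⁿ - q^{2i+1})`, and the congruence holds factor by
factor: `(1 - qⁿ y)(qⁿ - y) = qⁿ (1 - y)² - y (qⁿ - 1)²`. The cleared denominators are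
products of powers of `q` and of `1 - q^m` with `0 < m < n`, none of which vanishes at a
primitive `n`-th root of unity, so they are prime to `Φ_n(q)`.
-/

open Finset Polynomial

theorem Finset.dvd_prod_sub_prod {ι R : Type*} [CommRing R] (s : Finset ι) {d : R}
    (f g : ι → R) (h : ∀ i ∈ s, d ∣ f i - g i) :
    d ∣ ∏ i ∈ s, f i - ∏ i ∈ s, g i := by
  simp_rw [← Ideal.Quotient.eq_zero_iff_dvd, map_sub, sub_eq_zero, map_prod] at h ⊢
  exact prod_congr rfl h

theorem sub_one_sq_dvd_prod_sub {ι R : Type*} [CommRing R] (s : Finset ι) (x : R) (y : ι → R) :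
    (x - 1) ^ 2 ∣ (∏ i ∈ s, (1 - x * y i)) * ∏ i ∈ s, (x - y i) -
      x ^ s.card * (∏ i ∈ s, (1 - y i)) ^ 2 := by
  rw [← prod_mul_distrib, ← prod_pow, ← prod_const, ← prod_mul_distrib]
  -- `(1 - x y)(x - y) - x (1 - y)² = -y (x - 1)²`
  exact s.dvd_prod_sub_prod _ _ fun i _ => ⟨-y i, by ring⟩

section qPochhammer

variable {R : Type*} [CommRing R]

def qPochhammer (a q : R) (m : ℕ) : R := ∏ i ∈ range m, (1 - a * q ^ i)

theorem qPochhammer_add (a q : R) (m l : ℕ) :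
    qPochhammer a q (m + l) = qPochhammer a q m * qPochhammer (a * q ^ m) q l := by
  simp only [qPochhammer, prod_range_add, mul_assoc, ← pow_add]

theorem qPochhammer_succ (a q : R) (m : ℕ) :
    qPochhammer a q (m + 1) = qPochhammer a q m * (1 - a * q ^ m) :=
  prod_range_succ _ _

theorem qPochhammer_succ' (a q : R) (m : ℕ) :
    qPochhammer a q (m + 1) = (1 - a) * qPochhammer (a * q) q m := by
  simp only [qPochhammer, prod_range_succ', pow_zero, mul_one, pow_succ', mul_assoc]
  rw [mul_comm]

theorem qPochhammer_two_mul (a q : R) (m : ℕ) :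
    qPochhammer a q (2 * m) = qPochhammer a (q ^ 2) m * qPochhammer (a * q) (q ^ 2) m := by
  induction m with
  | zero => simp [qPochhammer]
  | succ m ih =>
    rw [show 2 * (m + 1) = 2 * m + 1 + 1 by ring, qPochhammer_succ, qPochhammer_succ, ih,
      qPochhammer_succ, qPochhammer_succ]
    ring

theorem qPochhammer_two_mul_add_one (a q : R) (k : ℕ) :
    qPochhammer a q (2 * k + 1) =
      qPochhammer a (q ^ 2) k * qPochhammer (a * q) (q ^ 2) k * (1 - a * q ^ (2 * k)) := by
  rw [qPochhammer_succ, qPochhammer_two_mul]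

theorem qPochhammer_self_sq_two_mul_add_one (q : R) (k : ℕ) :
    qPochhammer q (q ^ 2) (2 * k + 1) =
      qPochhammer q (q ^ 2) k * (1 - q ^ (2 * k + 1)) *
        qPochhammer (q ^ (2 * k + 3)) (q ^ 2) k := by
  nth_rw 1 [show 2 * k + 1 = k + (k + 1) by ring]
  rw [qPochhammer_add, qPochhammer_succ', show q * (q ^ 2) ^ k = q ^ (2 * k + 1) by ring,
    show q ^ (2 * k + 1) * q ^ 2 = q ^ (2 * k + 3) by ring, mul_assoc]

theorem map_qPochhammer {S F : Type*} [CommRing S] [FunLike F R S] [RingHomClass F R S] (f : F)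
    (a q : R) (m : ℕ) : f (qPochhammer a q m) = qPochhammer (f a) (f q) m := by
  simp [qPochhammer, map_prod]

theorem qPochhammer_ne_zero [IsDomain R] {a q : R} {m : ℕ} (h : ∀ i < m, a * q ^ i ≠ 1) :
    qPochhammer a q m ≠ 0 :=
  prod_ne_zero_iff.2 fun i hi => sub_ne_zero.2 (h i (mem_range.1 hi)).symm

theorem prod_range_pow_sub_pow_odd (q : R) (k : ℕ) :
    ∏ i ∈ range k, (q ^ (2 * k + 1) - q ^ (2 * i + 1)) =
      (-1) ^ k * q ^ (k ^ 2) * qPochhammer (q ^ 2) (q ^ 2) k := by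
  have hsum : ∑ i ∈ range k, (2 * i + 1) = k ^ 2 := by
    induction k with
    | zero => rfl
    | succ k ih => rw [sum_range_succ, ih]; ring
  have hfac : ∀ i ∈ range k, q ^ (2 * k + 1) - q ^ (2 * i + 1) =
      (-q ^ (2 * i + 1)) * (1 - q ^ 2 * (q ^ 2) ^ (k - 1 - i)) := by
    intro i hi
    obtain ⟨d, rfl⟩ : ∃ d, k = i + 1 + d := ⟨k - 1 - i, by have := mem_range.1 hi; omega⟩
    rw [show i + 1 + d - 1 - i = d by omega]
    ring
  rw [prod_congr rfl hfac, prod_mul_distrib, prod_neg, prod_pow_eq_pow_sum, hsum, card_range,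
    qPochhammer, prod_range_reflect (fun i => 1 - q ^ 2 * (q ^ 2) ^ i) k]

/-- Since `(-q;q)_{2k} = (q^{2k+2};q²)_k / (q;q²)_k`, this is the `q`-Morley congruence
`[2k, k]_{q²} ≡ (-1)^k q^{-k(k+1)} (-q;q)_{2k}²` with denominators cleared. -/
theorem qMorley_congruence (q : R) (k : ℕ) :
    (q ^ (2 * k + 1) - 1) ^ 2 ∣ (-1) ^ k * q ^ (k ^ 2) * qPochhammer (q ^ (2 * k + 2)) (q ^ 2) k *
      qPochhammer (q ^ 2) (q ^ 2) k - q ^ ((2 * k + 1) * k) * qPochhammer q (q ^ 2) k ^ 2 := by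
  have h := sub_one_sq_dvd_prod_sub (range k) (q ^ (2 * k + 1)) (fun i => q ^ (2 * i + 1))
  have hshift : ∏ i ∈ range k, (1 - q ^ (2 * k + 1) * q ^ (2 * i + 1)) =
      qPochhammer (q ^ (2 * k + 2)) (q ^ 2) k :=
    prod_congr rfl fun i _ => by ring
  have hodd : ∏ i ∈ range k, (1 - q ^ (2 * i + 1)) = qPochhammer q (q ^ 2) k :=
    prod_congr rfl fun i _ => by ring
  rw [hshift, hodd, prod_range_pow_sub_pow_odd, card_range, ← pow_mul] at h
  convert h using 2
  ring

end qPochhammer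

theorem qCongruent_of_mul_eq {n e : ℕ} {A B : RatFunc ℚ} {a b g : ℚ[X]}
    (hg : ¬ cyclotomic n ℚ ∣ g) (hA : A * algebraMap ℚ[X] (RatFunc ℚ) g = algebraMap _ _ a)
    (hB : B * algebraMap ℚ[X] (RatFunc ℚ) g = algebraMap _ _ b)
    (hab : cyclotomic n ℚ ^ e ∣ a - b) : qCongruent n e A B := by
  obtain ⟨f, hf⟩ := hab
  exact ⟨f, g, hg, by rw [sub_mul, hA, hB, ← map_sub, hf]⟩

theorem not_cyclotomic_dvd_of_aeval_ne_zero {K : Type*} [Field K] [CharZero K] {μ : K} {n : ℕ}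
    (hμ : IsPrimitiveRoot μ n) (hn : 0 < n) {g : ℚ[X]} (hg : aeval μ g ≠ 0) :
    ¬ cyclotomic n ℚ ∣ g := fun h => hg <| aeval_eq_zero_of_dvd_aeval_eq_zero h <| by
  rw [aeval_def, eval₂_eq_eval_map, map_cyclotomic]
  exact hμ.isRoot_cyclotomic hn

theorem not_cyclotomic_dvd_mul_qPochhammer (k : ℕ) :
    ¬ cyclotomic (2 * k + 1) ℚ ∣
      X ^ (k ^ 2 + 2 * k) * qPochhammer X (X ^ 2) k * qPochhammer (X ^ 2) (X ^ 2) k ^ 2 := by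
  have hμ := Complex.isPrimitiveRoot_exp (2 * k + 1) (by omega)
  refine not_cyclotomic_dvd_of_aeval_ne_zero hμ (by omega) ?_
  simp only [map_mul, map_pow, aeval_X, map_qPochhammer]
  refine mul_ne_zero (mul_ne_zero (pow_ne_zero _ (hμ.ne_zero (by omega)))
    (qPochhammer_ne_zero fun i hi => ?_)) (pow_ne_zero _ (qPochhammer_ne_zero fun i hi => ?_))
  · rw [← pow_mul, ← pow_succ']
    exact hμ.pow_ne_one_of_pos_of_lt (by omega) (by omega)
  · rw [← pow_succ', ← pow_mul]
    exact hμ.pow_ne_one_of_pos_of_lt (by omega) (by omega)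

section RatFunc

local notation "q" => (RatFunc.X : RatFunc ℚ)

/-- The paper's `a_{n,(n-1)/2}`. -/
noncomputable def centralTerm (n : ℕ) : RatFunc ℚ :=
  qPoch q (q ^ 2) n * q ^ (((n : ℤ) ^ 2 - 4 * n + 3) / 4) *
      (qPoch (q ^ 2) (q ^ 2) (n - 1) /
        (qPoch (q ^ 2) (q ^ 2) ((n - 1) / 2) * qPoch (q ^ 2) (q ^ 2) (n - 1 - (n - 1) / 2))) /
    ((1 - q ^ n) * qPoch (q ^ 2) (q ^ 2) (n - 1))

noncomputable def centralBinomialTerm (n : ℕ) : RatFunc ℚ :=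
  (-1) ^ ((n - 1) / 2) * q ^ ((1 : ℤ) - (n : ℤ)) *
    (qPoch q q (2 * n) / (qPoch q q n) ^ 2) / (1 + q ^ n)

theorem qPoch_eq_qPochhammer : qPoch = qPochhammer := rfl

theorem RatFunc.one_sub_X_pow_ne_zero {m : ℕ} (hm : m ≠ 0) : 1 - q ^ m ≠ 0 :=
  sub_ne_zero.2 (RatFunc.X_pow_ne_one hm).symm

theorem RatFunc.qPochhammer_X_pow_ne_zero {a d m : ℕ} (ha : a ≠ 0) :
    qPochhammer (q ^ a) (q ^ d) m ≠ 0 :=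
  qPochhammer_ne_zero fun i _ => by
    rw [← pow_mul, ← pow_add]
    exact RatFunc.X_pow_ne_one (by omega)

theorem centralTerm_mul_eq (k : ℕ) :
    centralTerm (2 * k + 1) * algebraMap ℚ[X] (RatFunc ℚ)
        (X ^ (k ^ 2 + 2 * k) * qPochhammer X (X ^ 2) k * qPochhammer (X ^ 2) (X ^ 2) k ^ 2) =
      algebraMap ℚ[X] (RatFunc ℚ)
        (X ^ ((2 * k + 1) * k) * qPochhammer X (X ^ 2) k ^ 2 *
          qPochhammer (X ^ (2 * k + 3)) (X ^ 2) k) := by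
  simp only [map_mul, map_pow, map_qPochhammer, RatFunc.algebraMap_X]
  have hexp :
      (((2 * k + 1 : ℕ) : ℤ) ^ 2 - 4 * (2 * k + 1 : ℕ) + 3) / 4 =
        (k ^ 2 : ℕ) - (k : ℤ) := by
    push_cast
    rw [show ((2 * k + 1 : ℤ) ^ 2 - 4 * (2 * k + 1) + 3) = 4 * ((k : ℤ) ^ 2 - k) by ring]
    exact Int.mul_ediv_cancel_left _ four_ne_zero
  have hX : q ≠ 0 := RatFunc.X_ne_zero
  have hn := RatFunc.one_sub_X_pow_ne_zero (m := 2 * k + 1) (by omega)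
  have hodd : qPochhammer q (q ^ 2) k ≠ 0 := by
    simpa using RatFunc.qPochhammer_X_pow_ne_zero (m := k) (d := 2) one_ne_zero
  have heven : ∀ m, qPochhammer (q ^ 2) (q ^ 2) m ≠ 0 :=
    fun m => RatFunc.qPochhammer_X_pow_ne_zero two_ne_zero
  rw [centralTerm, qPoch_eq_qPochhammer, show 2 * k + 1 - 1 = 2 * k by omega,
    show 2 * k / 2 = k by omega, show 2 * k - k = k by omega,
    qPochhammer_self_sq_two_mul_add_one, hexp, zpow_sub₀ hX, zpow_natCast, zpow_natCast]
  have := heven k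
  have := heven (2 * k)
  field_simp
  ring

theorem centralBinomialTerm_mul_eq (k : ℕ) :
    centralBinomialTerm (2 * k + 1) * algebraMap ℚ[X] (RatFunc ℚ)
        (X ^ (k ^ 2 + 2 * k) * qPochhammer X (X ^ 2) k * qPochhammer (X ^ 2) (X ^ 2) k ^ 2) =
      algebraMap ℚ[X] (RatFunc ℚ)
        ((-1) ^ k * X ^ (k ^ 2) * qPochhammer (X ^ (2 * k + 2)) (X ^ 2) k *
          qPochhammer (X ^ 2) (X ^ 2) k * qPochhammer (X ^ (2 * k + 3)) (X ^ 2) k) := by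
  simp only [map_mul, map_pow, map_neg, map_one, map_qPochhammer, RatFunc.algebraMap_X]
  have hX : q ≠ 0 := RatFunc.X_ne_zero
  have hn := RatFunc.one_sub_X_pow_ne_zero (m := 2 * k + 1) (by omega)
  have hn' : 1 + q ^ (2 * k + 1) ≠ 0 := by
    refine right_ne_zero_of_mul (a := 1 - q ^ (2 * k + 1)) ?_
    rw [show (1 - q ^ (2 * k + 1)) * (1 + q ^ (2 * k + 1)) = 1 - q ^ (2 * (2 * k + 1)) by ring]
    exact RatFunc.one_sub_X_pow_ne_zero (by omega)
  have hodd : qPochhammer q (q ^ 2) k ≠ 0 := by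
    simpa using RatFunc.qPochhammer_X_pow_ne_zero (m := k) (d := 2) one_ne_zero
  have heven : qPochhammer (q ^ 2) (q ^ 2) k ≠ 0 := RatFunc.qPochhammer_X_pow_ne_zero two_ne_zero
  rw [centralBinomialTerm, qPoch_eq_qPochhammer, two_mul (2 * k + 1), qPochhammer_add,
    show 2 * k + 1 - 1 = 2 * k by omega, show 2 * k / 2 = k by omega,
    show (1 : ℤ) - ((2 * k + 1 : ℕ) : ℤ) = -((2 * k : ℕ) : ℤ) by push_cast; ring,
    zpow_neg, zpow_natCast, qPochhammer_two_mul_add_one, qPochhammer_two_mul_add_one,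
    show q * q ^ (2 * k + 1) = q ^ (2 * k + 2) by ring, show q * q = q ^ 2 by ring,
    show q ^ (2 * k + 2) * q = q ^ (2 * k + 3) by ring,
    show q * q ^ (2 * k) = q ^ (2 * k + 1) by ring]
  field_simp
  ring

end RatFunc

theorem central_term_congruence_general (n : ℕ) (ho : Odd n) :
    qCongruent n 2
      (qPoch RatFunc.X (RatFunc.X ^ 2) n * RatFunc.X ^ (((n : ℤ) ^ 2 - 4 * n + 3) / 4) *
          (qPoch (RatFunc.X ^ 2) (RatFunc.X ^ 2) (n - 1) /
            (qPoch (RatFunc.X ^ 2) (RatFunc.X ^ 2) ((n - 1) / 2) *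
              qPoch (RatFunc.X ^ 2) (RatFunc.X ^ 2) (n - 1 - (n - 1) / 2))) /
        ((1 - RatFunc.X ^ n) * qPoch (RatFunc.X ^ 2) (RatFunc.X ^ 2) (n - 1)))
      ((-1) ^ ((n - 1) / 2) * RatFunc.X ^ ((1 : ℤ) - (n : ℤ)) *
        (qPoch RatFunc.X RatFunc.X (2 * n) / (qPoch RatFunc.X RatFunc.X n) ^ 2) /
        (1 + RatFunc.X ^ n)) := by
  obtain ⟨k, rfl⟩ := ho
  refine qCongruent_of_mul_eq (not_cyclotomic_dvd_mul_qPochhammer k) (centralTerm_mul_eq k)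
    (centralBinomialTerm_mul_eq k) ?_
  have hmorley :=
    (qMorley_congruence (X : ℚ[X]) k).mul_left (-qPochhammer (X ^ (2 * k + 3)) (X ^ 2) k)
  refine (pow_dvd_pow_of_dvd (cyclotomic.dvd_X_pow_sub_one _ ℚ) 2).trans ?_
  convert hmorley using 1
  ring

/-- For odd `n`, the central term
`a_{n,(n-1)/2} = (q;q²)_n q^((n²-4n+3)/4) [n-1 choose (n-1)/2]_{q²} / ((1-qⁿ)(q²;q²)_{n-1})`
satisfies `a_{n,(n-1)/2} ≡ (-1)^((n-1)/2) q^(1-n) [2n choose n]_q / (1+qⁿ) (mod Φ_n(q)²)`. -/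
theorem central_term_congruence (n : ℕ) (hn : 0 < n) (ho : Odd n) :
    qCongruent n 2
      (qPoch RatFunc.X (RatFunc.X ^ 2) n * RatFunc.X ^ (((n : ℤ) ^ 2 - 4 * n + 3) / 4) *
          (qPoch (RatFunc.X ^ 2) (RatFunc.X ^ 2) (n - 1) /
            (qPoch (RatFunc.X ^ 2) (RatFunc.X ^ 2) ((n - 1) / 2) *
              qPoch (RatFunc.X ^ 2) (RatFunc.X ^ 2) (n - 1 - (n - 1) / 2))) /
        ((1 - RatFunc.X ^ n) * qPoch (RatFunc.X ^ 2) (RatFunc.X ^ 2) (n - 1)))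
      ((-1) ^ ((n - 1) / 2) * RatFunc.X ^ ((1 : ℤ) - (n : ℤ)) *
        (qPoch RatFunc.X RatFunc.X (2 * n) / (qPoch RatFunc.X RatFunc.X n) ^ 2) /
        (1 + RatFunc.X ^ n)) :=
  central_term_congruence_general n ho
end
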